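/- Weak duality for the STE program: for any τ : ℝ and κ : ℝ, any STE-primal-feasible (π, Q, P) (i.e., TSP-feasible with ∑ j, π j = κ) and any STE-dual-feasible (v, u, w) for τ satisfy τ * (∑ i, Q i + ∑ r, P r) ≤ ∑ i, v i * x o i - ∑ r, u r * y o r + κ * w. -/

import Mathlib

open Finset

/-- TSP-feasibility: `π, Q, P` nonnegative, input constraints
`(∑ j, x j i * π j) + Q i * x o i = x o i`, and output constraints
`∑ j, y j r * π j = (1 + P r) * y o r`. -/
def TSPFeasible {n m s : ℕ} (x : Fin n → Fin m → ℝ) (y : Fin n → Fin s → ℝ)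
    (o : Fin n) (π : Fin n → ℝ) (Q : Fin m → ℝ) (P : Fin s → ℝ) : Prop :=
  (∀ j, 0 ≤ π j) ∧ (∀ i, 0 ≤ Q i) ∧ (∀ r, 0 ≤ P r) ∧
  (∀ i, (∑ j, x j i * π j) + Q i * x o i = x o i) ∧
  (∀ r, ∑ j, y j r * π j = (1 + P r) * y o r)

/-- TGP-feasibility for `τ`: nonnegative virtual gap for every unit `j`,
and each virtual price of unit `o` bounded below by `τ`. -/
def TGPFeasible {n m s : ℕ} (x : Fin n → Fin m → ℝ) (y : Fin n → Fin s → ℝ)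
    (o : Fin n) (τ : ℝ) (v : Fin m → ℝ) (u : Fin s → ℝ) : Prop :=
  (∀ j, 0 ≤ ∑ i, v i * x j i - ∑ r, u r * y j r) ∧
  (∀ i, τ ≤ x o i * v i) ∧ (∀ r, τ ≤ y o r * u r)

/-- STE-primal-feasibility: TSP-feasible plus the sum-of-intensities condition. -/
def STEPrimalFeasible {n m s : ℕ} (x : Fin n → Fin m → ℝ) (y : Fin n → Fin s → ℝ)
    (o : Fin n) (κ : ℝ) (π : Fin n → ℝ) (Q : Fin m → ℝ) (P : Fin s → ℝ) : Prop :=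
  TSPFeasible x y o π Q P ∧ ∑ j, π j = κ

/-- STE-dual-feasibility for `τ`. -/
def STEDualFeasible {n m s : ℕ} (x : Fin n → Fin m → ℝ) (y : Fin n → Fin s → ℝ)
    (o : Fin n) (τ : ℝ) (v : Fin m → ℝ) (u : Fin s → ℝ) (w : ℝ) : Prop :=
  (∀ j, 0 ≤ ∑ i, v i * x j i - ∑ r, u r * y j r + w) ∧
  (∀ i, τ ≤ x o i * v i) ∧ (∀ r, τ ≤ y o r * u r)

/-
Weak duality via the Lagrangian: substituting the primal constraints into the dual objective
rewrites it as `∑ j, π j * gap j + ∑ i, Q i * (x o i * v i) + ∑ r, P r * (y o r * u r)`,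
where `gap j ≥ 0` is the dual constraint of unit `j`. The first sum is nonnegative and the
other two dominate `τ * ∑ i, Q i` and `τ * ∑ r, P r`, since the slacks are nonnegative and
the prices `x o i * v i`, `y o r * u r` are at least `τ`.
-/

theorem sum_mul_sum_mul_comm {ι κ : Type*} [Fintype ι] [Fintype κ] (a : κ → ι → ℝ)
    (π : κ → ℝ) (v : ι → ℝ) :
    ∑ i, v i * ∑ j, a j i * π j = ∑ j, π j * ∑ i, v i * a j i := by
  simp_rw [mul_sum]
  rw [sum_comm]
  exact sum_congr rfl fun j _ => sum_congr rfl fun i _ => by ring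

theorem mul_sum_le_sum_mul {ι : Type*} [Fintype ι] {τ : ℝ} {q c : ι → ℝ}
    (hq : ∀ i, 0 ≤ q i) (hc : ∀ i, τ ≤ c i) : τ * ∑ i, q i ≤ ∑ i, q i * c i := by
  rw [mul_sum]
  exact sum_le_sum fun i _ => by
    rw [mul_comm]
    exact mul_le_mul_of_nonneg_left (hc i) (hq i)

namespace TSPFeasible

variable {n m s : ℕ} {x : Fin n → Fin m → ℝ} {y : Fin n → Fin s → ℝ} {o : Fin n}
  {π : Fin n → ℝ} {Q : Fin m → ℝ} {P : Fin s → ℝ}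

theorem sum_input_mul (h : TSPFeasible x y o π Q P) (v : Fin m → ℝ) :
    ∑ i, v i * x o i = ∑ j, π j * ∑ i, v i * x j i + ∑ i, Q i * (x o i * v i) := by
  have hx : ∀ i, v i * x o i = v i * ∑ j, x j i * π j + Q i * (x o i * v i) := fun i => by
    linear_combination (-v i) * h.2.2.2.1 i
  rw [sum_congr rfl fun i _ => hx i, sum_add_distrib, sum_mul_sum_mul_comm]

theorem sum_output_mul (h : TSPFeasible x y o π Q P) (u : Fin s → ℝ) :
    ∑ r, u r * y o r = ∑ j, π j * ∑ r, u r * y j r - ∑ r, P r * (y o r * u r) := by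
  have hy : ∀ r, u r * y o r = u r * ∑ j, y j r * π j - P r * (y o r * u r) := fun r => by
    linear_combination (-u r) * h.2.2.2.2 r
  rw [sum_congr rfl fun r _ => hy r, sum_sub_distrib, sum_mul_sum_mul_comm]

end TSPFeasible

theorem STEPrimalFeasible.dual_objective_eq {n m s : ℕ} {x : Fin n → Fin m → ℝ}
    {y : Fin n → Fin s → ℝ} {o : Fin n} {κ : ℝ} {π : Fin n → ℝ} {Q : Fin m → ℝ}
    {P : Fin s → ℝ} (h : STEPrimalFeasible x y o κ π Q P)
    (v : Fin m → ℝ) (u : Fin s → ℝ) (w : ℝ) :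
    ∑ i, v i * x o i - ∑ r, u r * y o r + κ * w =
      ∑ j, π j * (∑ i, v i * x j i - ∑ r, u r * y j r + w) +
        ∑ i, Q i * (x o i * v i) + ∑ r, P r * (y o r * u r) := by
  simp_rw [h.1.sum_input_mul v, h.1.sum_output_mul u, ← h.2, sum_mul, mul_add, mul_sub,
    sum_add_distrib, sum_sub_distrib]
  ring

theorem ste_weak_duality_general
    (n m s : ℕ) (x : Fin n → Fin m → ℝ) (y : Fin n → Fin s → ℝ) (o : Fin n)
    (τ κ : ℝ) (π : Fin n → ℝ) (Q : Fin m → ℝ) (P : Fin s → ℝ)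
    (v : Fin m → ℝ) (u : Fin s → ℝ) (w : ℝ)
    (hP : STEPrimalFeasible x y o κ π Q P)
    (hD : STEDualFeasible x y o τ v u w) :
    τ * (∑ i, Q i + ∑ r, P r) ≤ ∑ i, v i * x o i - ∑ r, u r * y o r + κ * w := by
  obtain ⟨hgap, hv, hu⟩ := hD
  have hgap_sum : 0 ≤ ∑ j, π j * (∑ i, v i * x j i - ∑ r, u r * y j r + w) :=
    sum_nonneg fun j _ => mul_nonneg (hP.1.1 j) (hgap j)
  have hin := mul_sum_le_sum_mul hP.1.2.1 hv
  have hout := mul_sum_le_sum_mul hP.1.2.2.1 hu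
  rw [hP.dual_objective_eq]
  linarith

/-- Weak duality for the STE program. -/
theorem ste_weak_duality
    (n m s : ℕ) (x : Fin n → Fin m → ℝ) (y : Fin n → Fin s → ℝ) (o : Fin n)
    (hx : ∀ j i, 0 < x j i) (hy : ∀ j r, 0 < y j r)
    (τ κ : ℝ) (π : Fin n → ℝ) (Q : Fin m → ℝ) (P : Fin s → ℝ)
    (v : Fin m → ℝ) (u : Fin s → ℝ) (w : ℝ)
    (hP : STEPrimalFeasible x y o κ π Q P)
    (hD : STEDualFeasible x y o τ v u w) :
    τ * (∑ i, Q i + ∑ r, P r) ≤ ∑ i, v i * x o i - ∑ r, u r * y o r + κ * w :=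
  ste_weak_duality_general n m s x y o τ κ π Q P v u w hP hD
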